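/- Fix M > 0 such that Λ := 2·G·Lip(V)·(M·T_max − 1 + e^{−M·T_max})/M² < 1, and suppose V(c) ≤ V_max for all c ≥ 0. For F, F′ ∈ 𝒫_{m,G}, let z_F, z_{F′} ∈ C(𝒯) denote the respective unique characteristic travel distances (solutions of z(t) = ∫₀ᵗ V(F(S_s(z))) ds and z(t) = ∫₀ᵗ V(F′(S_s(z))) ds). Then for all t, t′ ∈ 𝒯, |z_F(t) − z_{F′}(t′)| ≤ e^{M·T_max}·(Lip(V)/(1 − Λ))·∫₀^{T_max} |F(S_s(z_F)) − F′(S_s(z_F))| ds + V_max·|t − t′|. -/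

import Mathlib

open MeasureTheory Set Filter

noncomputable section

/-- `Sset Td Xs z t` is the set `S_t(z)` of pairs (departure time, trip length) of the
agents travelling at time `t` in a system with characteristic travel distance `z`:
`S_t(z) = {(τ, ξ) : τ ∈ [0,t] ∩ 𝒯_d, ξ ∈ (z(t) − z(τ), ∞) ∩ 𝒳}`. -/
def Sset (Td Xs : Set ℝ) (z : ℝ → ℝ) (t : ℝ) : Set (ℝ × ℝ) :=
  {p : ℝ × ℝ | p.1 ∈ Set.Icc 0 t ∩ Td ∧ p.2 ∈ Set.Ioi (z t - z p.1) ∩ Xs}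

/-- `memP Td Xs Ta m G F` says that `F ∈ 𝒫_{m,G}`: `F` is a Borel probability measure
on `𝒯_d × 𝒳` with `F(B) ≤ G·λ₂(B)` for every Borel `B` and whose `𝒳`-marginal agrees
with that of the demand profile `m`, i.e. `F(𝒯_d × Q) = m(Q × 𝒯_a)` for all Borel `Q`. -/
def memP (Td Xs Ta : Set ℝ) (m : Measure (ℝ × ℝ)) (G : ℝ) (F : Measure (ℝ × ℝ)) : Prop :=
  IsProbabilityMeasure F ∧ F ((Td ×ˢ Xs)ᶜ) = 0 ∧
    (∀ B : Set (ℝ × ℝ), MeasurableSet B → F B ≤ ENNReal.ofReal G * volume B) ∧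
    ∀ Q : Set ℝ, MeasurableSet Q → F (Td ×ˢ Q) = m (Q ×ˢ Ta)

/-- The map `𝒰(z, F)(t) = ∫₀ᵗ V(F(S_s(z))) ds`. -/
def Umap (Td Xs : Set ℝ) (V : ℝ → ℝ) (F : Measure (ℝ × ℝ)) (z : ℝ → ℝ) (t : ℝ) : ℝ :=
  ∫ s in (0:ℝ)..t, V ((F (Sset Td Xs z s)).toReal)

/-- The distance associated with the norm `‖u‖_M = sup_{t ∈ [0,Tmax]} e^{−Mt}|u(t)|`. -/
def dM (M Tmax : ℝ) (u w : ℝ → ℝ) : ℝ :=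
  ⨆ t : Set.Icc (0:ℝ) Tmax, Real.exp (-(M * t.1)) * |u t.1 - w t.1|

/-!
Write `a s`, `b s`, `c s` for `F(S_s(z_F))`, `F'(S_s(z_F))`, `F'(S_s(z_{F'}))`. Two sets
`S_s(z)` and `S_{s'}(z')` differ only inside the region between the graphs of
`τ ↦ z s - z τ` and `τ ↦ z' s' - z' τ` over `[0, min s s']`, plus the strip `(s', s] × 𝒳`; so the
density bound `F ≤ G • λ₂` controls `|F(S_s(z)) - F(S_{s'}(z'))|` by `G` times the area of that
region. This makes `a`, `b`, `c` continuous and gives `|b s - c s| ≤ 2 G s e^{Ms} d_M(z_F, z_{F'})`.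
Feeding this and the Lipschitz bound on `V` into the two fixed-point equations, and using
`e^{-Mt} ∫₀ᵗ s e^{Ms} ds ≤ (M T - 1 + e^{-MT}) / M²`, yields
`d_M(z_F, z_{F'}) ≤ Lip(V) ∫₀ᵀ |a - b| + Λ d_M(z_F, z_{F'})`, which bounds `d_M` because `Λ < 1`.
Finally `|z_{F'} t - z_{F'} t'| ≤ V_max |t - t'|`, as `z_{F'}` is the integral of a function bounded
by `V_max`.
-/

open scoped ENNReal NNReal Interval Topology

section MeasureBounds

variable {α : Type*} [MeasurableSpace α] {μ ν : Measure α} {A B E : Set α}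

theorem abs_measureReal_sub_le_of_sdiff_subset [IsFiniteMeasure μ] (hA : A \ B ⊆ E)
    (hB : B \ A ⊆ E) : |μ.real A - μ.real B| ≤ μ.real E :=
  abs_sub_le_iff.2 ⟨(le_measureReal_sdiff (μ := μ)).trans (measureReal_mono hA),
    (le_measureReal_sdiff (μ := μ)).trans (measureReal_mono hB)⟩

theorem measureReal_le_mul_measureReal_of_le_smul {G : ℝ} (hG : 0 ≤ G)
    (hμ : μ ≤ ENNReal.ofReal G • ν) (hE : ν E ≠ ∞) : μ.real E ≤ G * ν.real E := by
  have := ENNReal.toReal_mono (ENNReal.mul_ne_top ENNReal.ofReal_ne_top hE) (Measure.le_iff'.1 hμ E)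
  rwa [ENNReal.toReal_mul, ENNReal.toReal_ofReal hG] at this

end MeasureBounds

def uIocRegion (f g : ℝ → ℝ) (s : Set ℝ) : Set (ℝ × ℝ) :=
  {p | p.1 ∈ s ∧ p.2 ∈ Ι (f p.1) (g p.1)}

section uIocRegion

variable {f g : ℝ → ℝ} {s : Set ℝ}

theorem uIocRegion_comm (f g : ℝ → ℝ) (s : Set ℝ) : uIocRegion f g s = uIocRegion g f s := by
  simp only [uIocRegion, uIoc_comm]

theorem measurableSet_uIocRegion (hf : Measurable f) (hg : Measurable g) (hs : MeasurableSet s) :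
    MeasurableSet (uIocRegion f g s) :=
  measurableSet_region_between_oc (hf.min hg) (hf.max hg) hs

theorem volume_uIocRegion (hf : Measurable f) (hg : Measurable g) (hs : MeasurableSet s) :
    volume (uIocRegion f g s) = ∫⁻ x in s, ENNReal.ofReal |g x - f x| := by
  rw [Measure.volume_eq_prod, Measure.prod_apply (measurableSet_uIocRegion hf hg hs),
    ← lintegral_indicator hs]
  congr 1 with x
  by_cases hx : x ∈ s <;> simp [uIocRegion, hx, Real.volume_uIoc]

theorem volume_uIocRegion_Icc (hf : Continuous f) (hg : Continuous g) {t : ℝ} (ht : 0 ≤ t) :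
    volume (uIocRegion f g (Icc 0 t)) = ENNReal.ofReal (∫ τ in 0..t, |g τ - f τ|) := by
  rw [volume_uIocRegion hf.measurable hg.measurable measurableSet_Icc,
    intervalIntegral.integral_of_le ht, ← integral_Icc_eq_integral_Ioc]
  exact (ofReal_integral_eq_lintegral_ofReal (hg.sub hf).abs.integrableOn_Icc
    (Eventually.of_forall fun _ => abs_nonneg _)).symm

end uIocRegion

theorem Sset_sdiff_subset (Td Xs : Set ℝ) (z z' : ℝ → ℝ) (s s' : ℝ) :
    Sset Td Xs z s \ Sset Td Xs z' s' ⊆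
      uIocRegion (fun τ => z s - z τ) (fun τ => z' s' - z' τ) (Icc 0 (min s s'))
        ∪ Ι s' s ×ˢ Xs := by
  rintro ⟨τ, ξ⟩ ⟨⟨⟨⟨hτ0, hτs⟩, hτd⟩, hξ, hξX⟩, hnot⟩
  by_cases hτs' : τ ≤ s'
  · have hξ' : ξ ≤ z' s' - z' τ := not_lt.1 fun h => hnot ⟨⟨⟨hτ0, hτs'⟩, hτd⟩, h, hξX⟩
    exact Or.inl ⟨⟨hτ0, le_min hτs hτs'⟩, Ioc_subset_uIoc ⟨hξ, hξ'⟩⟩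
  · exact Or.inr ⟨Ioc_subset_uIoc ⟨lt_of_not_ge hτs', hτs⟩, hξX⟩

section Sset

variable {Td Xs : Set ℝ} {G : ℝ} {F : Measure (ℝ × ℝ)} [IsFiniteMeasure F] {z z' : ℝ → ℝ}

theorem abs_measureReal_Sset_sub_le (hXs : volume Xs ≠ ∞) (hG : 0 ≤ G)
    (hF : F ≤ ENNReal.ofReal G • volume) (hz : Continuous z) (hz' : Continuous z') {s s' : ℝ}
    (hs : 0 ≤ s) (hs' : 0 ≤ s') :
    |F.real (Sset Td Xs z s) - F.real (Sset Td Xs z' s')| ≤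
      G * ((∫ τ in 0..min s s', |(z' s' - z' τ) - (z s - z τ)|) + |s - s'| * volume.real Xs) := by
  set R := uIocRegion (fun τ => z s - z τ) (fun τ => z' s' - z' τ) (Icc 0 (min s s'))
  have hR : volume R = ENNReal.ofReal (∫ τ in 0..min s s', |(z' s' - z' τ) - (z s - z τ)|) :=
    volume_uIocRegion_Icc (by fun_prop) (by fun_prop) (le_min hs hs')
  have hP : volume (Ι s' s ×ˢ Xs) = ENNReal.ofReal |s - s'| * volume Xs := by
    rw [Measure.volume_eq_prod, Measure.prod_prod, Real.volume_uIoc]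
  have hsub := Sset_sdiff_subset Td Xs z' z s' s
  rw [uIocRegion_comm, min_comm, uIoc_comm] at hsub
  calc _ ≤ F.real (R ∪ Ι s' s ×ˢ Xs) :=
        abs_measureReal_sub_le_of_sdiff_subset (Sset_sdiff_subset Td Xs z z' s s') hsub
    _ ≤ F.real R + F.real (Ι s' s ×ˢ Xs) := measureReal_union_le _ _
    _ ≤ G * volume.real R + G * volume.real (Ι s' s ×ˢ Xs) :=
        add_le_add (measureReal_le_mul_measureReal_of_le_smul hG hF (by simp [hR]))
          (measureReal_le_mul_measureReal_of_le_smul hG hF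
            (by rw [hP]; exact ENNReal.mul_ne_top ENNReal.ofReal_ne_top hXs))
    _ = _ := by
        rw [measureReal_def, measureReal_def, hR, hP, ENNReal.toReal_ofReal
          (intervalIntegral.integral_nonneg (le_min hs hs') fun _ _ => abs_nonneg _),
          ENNReal.toReal_mul, ENNReal.toReal_ofReal (abs_nonneg _), measureReal_def, mul_add]

theorem continuousOn_measureReal_Sset (hXs : volume Xs ≠ ∞) (hG : 0 ≤ G)
    (hF : F ≤ ENNReal.ofReal G • volume) (hz : Continuous z) :
    ContinuousOn (fun s => F.real (Sset Td Xs z s)) (Ici 0) := by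
  intro s₀ hs₀
  have hbound : ∀ s ∈ Ici (0 : ℝ), ‖F.real (Sset Td Xs z s) - F.real (Sset Td Xs z s₀)‖ ≤
      G * (s₀ * |z s₀ - z s| + |s - s₀| * volume.real Xs) := by
    intro s hs
    refine (abs_measureReal_Sset_sub_le hXs hG hF hz hz hs hs₀).trans ?_
    simp only [sub_sub_sub_cancel_right, intervalIntegral.integral_const, smul_eq_mul, sub_zero]
    gcongr
    exact min_le_right _ _
  have hlim : Tendsto (fun s => G * (s₀ * |z s₀ - z s| + |s - s₀| * volume.real Xs)) (𝓝 s₀)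
      (𝓝 0) := by
    have hcont : Continuous fun s => G * (s₀ * |z s₀ - z s| + |s - s₀| * volume.real Xs) := by
      fun_prop
    simpa using hcont.tendsto s₀
  exact tendsto_iff_norm_sub_tendsto_zero.2 <| squeeze_zero' (.of_forall fun _ => norm_nonneg _)
    (eventually_nhdsWithin_of_forall hbound) (hlim.mono_left nhdsWithin_le_nhds)

theorem abs_measureReal_Sset_sub_le_of_abs_sub_le (hXs : volume Xs ≠ ∞) (hG : 0 ≤ G)
    (hF : F ≤ ENNReal.ofReal G • volume) (hz : Continuous z) (hz' : Continuous z') {s δ : ℝ}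
    (hs : 0 ≤ s) (hδ : ∀ τ ∈ Icc 0 s, |z τ - z' τ| ≤ δ) :
    |F.real (Sset Td Xs z s) - F.real (Sset Td Xs z' s)| ≤ 2 * G * δ * s := by
  have hint : ∫ τ in 0..s, |(z' s - z' τ) - (z s - z τ)| ≤ ∫ _ in 0..s, 2 * δ := by
    refine intervalIntegral.integral_mono_on hs (Continuous.intervalIntegrable (by fun_prop) _ _)
      intervalIntegrable_const fun τ hτ => ?_
    calc |(z' s - z' τ) - (z s - z τ)| = |(z τ - z' τ) - (z s - z' s)| := by ring_nf
      _ ≤ |z τ - z' τ| + |z s - z' s| := abs_sub _ _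
      _ ≤ 2 * δ := by linarith [hδ τ hτ, hδ s ⟨hs, le_rfl⟩]
  calc _ ≤ G * ((∫ τ in 0..s, |(z' s - z' τ) - (z s - z τ)|) + |s - s| * volume.real Xs) := by
        simpa only [min_self] using
          abs_measureReal_Sset_sub_le (Td := Td) hXs hG hF hz hz' hs hs
    _ ≤ G * (∫ _ in 0..s, 2 * δ) := by
        rw [sub_self, abs_zero, zero_mul, add_zero]; gcongr
    _ = 2 * G * δ * s := by simp only [intervalIntegral.integral_const, smul_eq_mul, sub_zero]; ring

end Sset

section RealAnalysis

open Real

theorem monotoneOn_sub_one_add_exp_neg : MonotoneOn (fun x => x - 1 + exp (-x)) (Ici 0) := by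
  intro x hx y _ hxy
  have hdecay : exp (-x) - exp (-y) ≤ y - x := by
    have hsplit : exp (-y) = exp (-x) * exp (-(y - x)) := by rw [← exp_add]; ring_nf
    have hx₁ : exp (-x) ≤ 1 := exp_le_one_iff.2 (neg_nonpos.2 hx)
    have hlin := add_one_le_exp (-(y - x))
    nlinarith [exp_pos (-x)]
  dsimp only
  linarith

theorem integral_mul_exp_mul {M : ℝ} (hM : M ≠ 0) (t : ℝ) :
    ∫ s in 0..t, s * exp (M * s) = ((M * t - 1) * exp (M * t) + 1) / M ^ 2 := by
  have hderiv : ∀ s, HasDerivAt (fun s => (M * s - 1) * exp (M * s) / M ^ 2)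
      (s * exp (M * s)) s := by
    intro s
    have hlin : HasDerivAt (fun s => M * s) M s := by simpa using (hasDerivAt_id s).const_mul M
    refine (((hlin.sub_const 1).mul hlin.exp).div_const (M ^ 2)).congr_deriv ?_
    field_simp
    ring
  rw [intervalIntegral.integral_eq_sub_of_hasDerivAt (fun s _ => hderiv s)
    (Continuous.intervalIntegrable (by fun_prop) _ _)]
  simp only [mul_zero, zero_sub, exp_zero, mul_one]
  ring

theorem exp_neg_mul_mul_integral_mul_exp_le {M t T : ℝ} (hM : 0 < M) (ht : 0 ≤ t) (htT : t ≤ T) :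
    exp (-(M * t)) * ∫ s in 0..t, s * exp (M * s) ≤ (M * T - 1 + exp (-(M * T))) / M ^ 2 := by
  have hmono := monotoneOn_sub_one_add_exp_neg (mul_nonneg hM.le ht)
    (mul_nonneg hM.le (ht.trans htT)) (mul_le_mul_of_nonneg_left htT hM.le)
  have hinv : exp (-(M * t)) * exp (M * t) = 1 := by rw [← exp_add]; simp
  rw [integral_mul_exp_mul hM.ne', mul_div_assoc', mul_add, mul_one, mul_left_comm, hinv, mul_one]
  gcongr

end RealAnalysis

section WeightedDistance

variable {M T : ℝ} {u w : ℝ → ℝ}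

theorem abs_sub_le_dM_mul_exp (hu : Continuous u) (hw : Continuous w) {t : ℝ} (ht : t ∈ Icc 0 T) :
    |u t - w t| ≤ dM M T u w * Real.exp (M * t) := by
  have hbdd : BddAbove (range fun τ : Icc (0 : ℝ) T => Real.exp (-(M * τ)) * |u τ - w τ|) := by
    rw [← image_eq_range (fun τ => Real.exp (-(M * τ)) * |u τ - w τ|)]
    exact (isCompact_Icc.image (by fun_prop)).bddAbove
  have h := le_ciSup hbdd ⟨t, ht⟩
  rw [Real.exp_neg, inv_mul_le_iff₀ (Real.exp_pos _)] at h
  rwa [mul_comm]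

theorem dM_le_of_forall_le (hT : 0 ≤ T) {C : ℝ}
    (h : ∀ t ∈ Icc 0 T, Real.exp (-(M * t)) * |u t - w t| ≤ C) : dM M T u w ≤ C :=
  have : Nonempty (Icc (0 : ℝ) T) := ⟨⟨0, le_rfl, hT⟩⟩
  ciSup_le fun t => h t.1 t.2

theorem dM_nonneg (hu : Continuous u) (hw : Continuous w) (hT : 0 ≤ T) :
    0 ≤ dM M T u w := by
  simpa using (abs_nonneg _).trans (abs_sub_le_dM_mul_exp (M := M) hu hw ⟨le_rfl, hT⟩)

end WeightedDistance

section TimeIntegrals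

variable {V : ℝ → ℝ} {L : ℝ≥0} {t : ℝ} {a c : ℝ → ℝ}

theorem abs_integral_comp_sub_integral_comp_le (hV : LipschitzOnWith L V (Ici 0)) (ht : 0 ≤ t)
    (ha : ContinuousOn a (Icc 0 t)) (hc : ContinuousOn c (Icc 0 t))
    (ha₀ : ∀ s, 0 ≤ a s) (hc₀ : ∀ s, 0 ≤ c s) :
    |(∫ s in 0..t, V (a s)) - ∫ s in 0..t, V (c s)| ≤ L * ∫ s in 0..t, |a s - c s| := by
  have hVa : IntervalIntegrable (fun s => V (a s)) volume 0 t :=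
    (hV.continuousOn.comp ha fun s _ => ha₀ s).intervalIntegrable_of_Icc ht
  have hVc : IntervalIntegrable (fun s => V (c s)) volume 0 t :=
    (hV.continuousOn.comp hc fun s _ => hc₀ s).intervalIntegrable_of_Icc ht
  rw [← intervalIntegral.integral_sub hVa hVc, ← intervalIntegral.integral_const_mul]
  refine (intervalIntegral.abs_integral_le_integral_abs ht).trans
    (intervalIntegral.integral_mono_on ht (hVa.sub hVc).abs
      (((ha.sub hc).abs.intervalIntegrable_of_Icc ht).const_mul _) fun s _ => ?_)
  simpa only [Real.dist_eq] using hV.dist_le_mul (a s) (ha₀ s) (c s) (hc₀ s)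

theorem abs_sub_le_of_eq_intervalIntegral {z g : ℝ → ℝ} {T C : ℝ}
    (hz : ∀ t ∈ Icc 0 T, z t = ∫ s in 0..t, g s) (hg : IntervalIntegrable g volume 0 T)
    (hC : ∀ s, |g s| ≤ C) {t t' : ℝ} (ht : t ∈ Icc 0 T) (ht' : t' ∈ Icc 0 T) :
    |z t - z t'| ≤ C * |t - t'| := by
  have hsub : ∀ τ ∈ Icc 0 T, IntervalIntegrable g volume 0 τ := fun τ hτ =>
    hg.mono_set (uIcc_subset_uIcc_left (Icc_subset_uIcc hτ))
  rw [hz t ht, hz t' ht', intervalIntegral.integral_interval_sub_left (hsub t ht) (hsub t' ht')]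
  simpa only [Real.norm_eq_abs] using intervalIntegral.norm_integral_le_of_norm_le_const
    (a := t') (b := t) fun s _ => (Real.norm_eq_abs (g s)).trans_le (hC s)

end TimeIntegrals

theorem exp_neg_mul_abs_sub_le_of_eq_integral {V : ℝ → ℝ} {L : ℝ≥0}
    (hV : LipschitzOnWith L V (Ici 0)) {M T K : ℝ} (hM : 0 < M) (hK : 0 ≤ K)
    {a b c z z' : ℝ → ℝ} (ha : ContinuousOn a (Icc 0 T)) (hb : ContinuousOn b (Icc 0 T))
    (hc : ContinuousOn c (Icc 0 T)) (ha₀ : ∀ s, 0 ≤ a s) (hc₀ : ∀ s, 0 ≤ c s)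
    (hbc : ∀ s ∈ Icc 0 T, |b s - c s| ≤ K * (s * Real.exp (M * s)))
    (hz : ∀ t ∈ Icc 0 T, z t = ∫ s in 0..t, V (a s))
    (hz' : ∀ t ∈ Icc 0 T, z' t = ∫ s in 0..t, V (c s)) {t : ℝ} (ht : t ∈ Icc 0 T) :
    Real.exp (-(M * t)) * |z t - z' t|
      ≤ L * (∫ s in 0..T, |a s - b s|) + L * K * ((M * T - 1 + Real.exp (-(M * T))) / M ^ 2) := by
  have hsub : Icc 0 t ⊆ Icc 0 T := Icc_subset_Icc_right ht.2
  have hab_int {τ : ℝ} (hτ : τ ∈ Icc 0 T) : IntervalIntegrable (fun s => |a s - b s|) volume 0 τ :=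
    ((ha.sub hb).abs.mono (Icc_subset_Icc_right hτ.2)).intervalIntegrable_of_Icc hτ.1
  have hbc_int : IntervalIntegrable (fun s => |b s - c s|) volume 0 t :=
    ((hb.sub hc).abs.mono hsub).intervalIntegrable_of_Icc ht.1
  have hpt : |z t - z' t|
      ≤ L * ((∫ s in 0..T, |a s - b s|) + K * ∫ s in 0..t, s * Real.exp (M * s)) :=
    calc |z t - z' t| ≤ L * ∫ s in 0..t, |a s - c s| := by
          rw [hz t ht, hz' t ht]
          exact abs_integral_comp_sub_integral_comp_le hV ht.1 (ha.mono hsub) (hc.mono hsub) ha₀ hc₀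
      _ ≤ L * ∫ s in 0..t, (|a s - b s| + |b s - c s|) := by
          gcongr
          exact intervalIntegral.integral_mono_on ht.1
            (((ha.sub hc).abs.mono hsub).intervalIntegrable_of_Icc ht.1)
            ((hab_int ht).add hbc_int) fun s _ => abs_sub_le _ _ _
      _ = L * ((∫ s in 0..t, |a s - b s|) + ∫ s in 0..t, |b s - c s|) := by
          rw [intervalIntegral.integral_add (hab_int ht) hbc_int]
      _ ≤ L * ((∫ s in 0..T, |a s - b s|) + K * ∫ s in 0..t, s * Real.exp (M * s)) := by
          gcongr
          · exact intervalIntegral.integral_mono_interval le_rfl ht.1 ht.2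
              (.of_forall fun _ => abs_nonneg _) (hab_int ⟨ht.1.trans ht.2, le_rfl⟩)
          · rw [← intervalIntegral.integral_const_mul]
            exact intervalIntegral.integral_mono_on ht.1 hbc_int
              (Continuous.intervalIntegrable (by fun_prop) _ _) fun s hs => hbc s (hsub hs)
  have hI₀ : 0 ≤ ∫ s in 0..T, |a s - b s| :=
    intervalIntegral.integral_nonneg (ht.1.trans ht.2) fun _ _ => abs_nonneg _
  calc Real.exp (-(M * t)) * |z t - z' t|
      ≤ Real.exp (-(M * t)) * (L * ((∫ s in 0..T, |a s - b s|)
          + K * ∫ s in 0..t, s * Real.exp (M * s))) := by gcongr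
    _ = Real.exp (-(M * t)) * (L * ∫ s in 0..T, |a s - b s|)
          + L * K * (Real.exp (-(M * t)) * ∫ s in 0..t, s * Real.exp (M * s)) := by ring
    _ ≤ 1 * (L * ∫ s in 0..T, |a s - b s|)
          + L * K * ((M * T - 1 + Real.exp (-(M * T))) / M ^ 2) := by
        gcongr
        · exact Real.exp_le_one_iff.2 (neg_nonpos.2 (mul_nonneg hM.le ht.1))
        · exact exp_neg_mul_mul_integral_mul_exp_le hM ht.1 ht.2
    _ = _ := by rw [one_mul]

theorem abs_measureReal_Sset_sub_le_dM {Td Xs : Set ℝ} (hXs : volume Xs ≠ ∞) {G : ℝ} (hG : 0 ≤ G)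
    {F : Measure (ℝ × ℝ)} [IsFiniteMeasure F] (hF : F ≤ ENNReal.ofReal G • volume)
    {z z' : ℝ → ℝ} (hz : Continuous z) (hz' : Continuous z') {M T s : ℝ} (hM : 0 ≤ M)
    (hs : s ∈ Icc 0 T) :
    |F.real (Sset Td Xs z s) - F.real (Sset Td Xs z' s)|
      ≤ 2 * G * dM M T z z' * (s * Real.exp (M * s)) := by
  have hδ : ∀ τ ∈ Icc 0 s, |z τ - z' τ| ≤ dM M T z z' * Real.exp (M * s) := fun τ hτ =>
    calc |z τ - z' τ| ≤ dM M T z z' * Real.exp (M * τ) :=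
          abs_sub_le_dM_mul_exp hz hz' ⟨hτ.1, hτ.2.trans hs.2⟩
      _ ≤ dM M T z z' * Real.exp (M * s) := by
          have := dM_nonneg (M := M) hz hz' (hs.1.trans hs.2)
          gcongr
          exact hτ.2
  calc _ ≤ 2 * G * (dM M T z z' * Real.exp (M * s)) * s :=
        abs_measureReal_Sset_sub_le_of_abs_sub_le hXs hG hF hz hz' hs.1 hδ
    _ = _ := by ring

theorem dM_le_of_fixedPoints {Td Xs : Set ℝ} (hXs : volume Xs ≠ ∞) {G : ℝ} (hG : 0 ≤ G)
    {F F' : Measure (ℝ × ℝ)} [IsFiniteMeasure F] [IsFiniteMeasure F']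
    (hF : F ≤ ENNReal.ofReal G • volume) (hF' : F' ≤ ENNReal.ofReal G • volume)
    {V : ℝ → ℝ} {L : ℝ≥0} (hV : LipschitzOnWith L V (Ici 0))
    {z z' : ℝ → ℝ} (hz : Continuous z) (hz' : Continuous z') {M T : ℝ} (hM : 0 < M) (hT : 0 ≤ T)
    (hfix : ∀ t ∈ Icc 0 T, z t = Umap Td Xs V F z t)
    (hfix' : ∀ t ∈ Icc 0 T, z' t = Umap Td Xs V F' z' t) :
    dM M T z z' ≤ L * (∫ s in 0..T, |F.real (Sset Td Xs z s) - F'.real (Sset Td Xs z s)|)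
      + 2 * G * L * (M * T - 1 + Real.exp (-(M * T))) / M ^ 2 * dM M T z z' := by
  have hcont {F : Measure (ℝ × ℝ)} [IsFiniteMeasure F] (hF : F ≤ ENNReal.ofReal G • volume)
      {z : ℝ → ℝ} (hz : Continuous z) : ContinuousOn (fun s => F.real (Sset Td Xs z s)) (Icc 0 T) :=
    (continuousOn_measureReal_Sset hXs hG hF hz).mono Icc_subset_Ici_self
  refine dM_le_of_forall_le hT fun t ht => ?_
  calc _ ≤ L * (∫ s in 0..T, |F.real (Sset Td Xs z s) - F'.real (Sset Td Xs z s)|)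
        + L * (2 * G * dM M T z z') * ((M * T - 1 + Real.exp (-(M * T))) / M ^ 2) :=
      exp_neg_mul_abs_sub_le_of_eq_integral hV hM
        (by have := dM_nonneg (M := M) hz hz' hT; positivity) (hcont hF hz) (hcont hF' hz)
        (hcont hF' hz') (fun _ => measureReal_nonneg) (fun _ => measureReal_nonneg)
        (fun s hs => abs_measureReal_Sset_sub_le_dM hXs hG hF' hz hz' hM.le hs) hfix hfix' ht
    _ = _ := by ring

theorem abs_sub_le_of_fixedPoint {Td Xs : Set ℝ} (hXs : volume Xs ≠ ∞) {G : ℝ} (hG : 0 ≤ G)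
    {F : Measure (ℝ × ℝ)} [IsFiniteMeasure F] (hF : F ≤ ENNReal.ofReal G • volume)
    {V : ℝ → ℝ} (hV : ContinuousOn V (Ici 0)) {Vmax : ℝ} (hVmax : ∀ c, 0 ≤ c → |V c| ≤ Vmax)
    {z : ℝ → ℝ} (hz : Continuous z) {T : ℝ} (hfix : ∀ t ∈ Icc 0 T, z t = Umap Td Xs V F z t)
    {t t' : ℝ} (ht : t ∈ Icc 0 T) (ht' : t' ∈ Icc 0 T) :
    |z t - z t'| ≤ Vmax * |t - t'| := by
  refine abs_sub_le_of_eq_intervalIntegral hfix ?_ (fun s => hVmax _ measureReal_nonneg) ht ht'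
  exact ((hV.comp (continuousOn_measureReal_Sset hXs hG hF hz) fun _ _ => measureReal_nonneg).mono
    Icc_subset_Ici_self).intervalIntegrable_of_Icc (ht.1.trans ht.2)

theorem memP.le_ofReal_smul_volume {Td Xs Ta : Set ℝ} {m : Measure (ℝ × ℝ)} {G : ℝ}
    {F : Measure (ℝ × ℝ)} (hF : memP Td Xs Ta m G F) : F ≤ ENNReal.ofReal G • volume :=
  Measure.le_iff.2 fun B hB => by simpa using hF.2.2.1 B hB

theorem characteristic_travel_distance_joint_modulus_general
    (Tmax Xmin Xmax G : ℝ)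
    (hG : 0 < G)
    (Td Ta : Set ℝ)
    (m : Measure (ℝ × ℝ))
    (V : ℝ → ℝ) (LV : NNReal) (hV : LipschitzOnWith LV V (Set.Ici 0))
    (hVpos : ∀ c : ℝ, 0 ≤ c → 0 < V c)
    (Vmax : ℝ) (hVmax : ∀ c : ℝ, 0 ≤ c → V c ≤ Vmax)
    (M : ℝ) (hM : 0 < M)
    (hΛ : 2 * G * (LV : ℝ) * (M * Tmax - 1 + Real.exp (-(M * Tmax))) / M ^ 2 < 1)
    (F F' : Measure (ℝ × ℝ))
    (hF : memP Td (Set.Icc Xmin Xmax) Ta m G F)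
    (hF' : memP Td (Set.Icc Xmin Xmax) Ta m G F')
    (zF zF' : ℝ → ℝ) (hzF : Continuous zF) (hzF' : Continuous zF')
    (hfix : ∀ t ∈ Set.Icc (0:ℝ) Tmax, zF t = Umap Td (Set.Icc Xmin Xmax) V F zF t)
    (hfix' : ∀ t ∈ Set.Icc (0:ℝ) Tmax, zF' t = Umap Td (Set.Icc Xmin Xmax) V F' zF' t) :
    ∀ t ∈ Set.Icc (0:ℝ) Tmax, ∀ t' ∈ Set.Icc (0:ℝ) Tmax,
      |zF t - zF' t'|
        ≤ Real.exp (M * Tmax)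
            * ((LV : ℝ) /
                (1 - 2 * G * (LV : ℝ) * (M * Tmax - 1 + Real.exp (-(M * Tmax))) / M ^ 2))
            * (∫ s in (0:ℝ)..Tmax,
                |(F (Sset Td (Set.Icc Xmin Xmax) zF s)).toReal
                  - (F' (Sset Td (Set.Icc Xmin Xmax) zF s)).toReal|)
          + Vmax * |t - t'| := by
  intro t ht t' ht'
  simp only [← measureReal_def]
  set Λ := 2 * G * (LV : ℝ) * (M * Tmax - 1 + Real.exp (-(M * Tmax))) / M ^ 2
  set I := ∫ s in 0..Tmax,
    |F.real (Sset Td (Icc Xmin Xmax) zF s) - F'.real (Sset Td (Icc Xmin Xmax) zF s)|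
  have hT : 0 ≤ Tmax := ht.1.trans ht.2
  have hXs : volume (Icc Xmin Xmax) ≠ ∞ := measure_Icc_lt_top.ne
  have : IsProbabilityMeasure F := hF.1
  have : IsProbabilityMeasure F' := hF'.1
  have hD : dM M Tmax zF zF' ≤ LV * I / (1 - Λ) := by
    rw [le_div_iff₀ (sub_pos.2 hΛ)]
    linarith [dM_le_of_fixedPoints hXs hG.le hF.le_ofReal_smul_volume hF'.le_ofReal_smul_volume
      hV hzF hzF' hM hT hfix hfix']
  have hdist : |zF t - zF' t| ≤ Real.exp (M * Tmax) * (LV / (1 - Λ)) * I :=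
    calc |zF t - zF' t| ≤ dM M Tmax zF zF' * Real.exp (M * t) := abs_sub_le_dM_mul_exp hzF hzF' ht
      _ ≤ LV * I / (1 - Λ) * Real.exp (M * Tmax) :=
          mul_le_mul hD (Real.exp_le_exp.2 (by gcongr; exact ht.2)) (Real.exp_pos _).le
            ((dM_nonneg hzF hzF' hT).trans hD)
      _ = Real.exp (M * Tmax) * (LV / (1 - Λ)) * I := by ring
  have htime : |zF' t - zF' t'| ≤ Vmax * |t - t'| :=
    abs_sub_le_of_fixedPoint hXs hG.le hF'.le_ofReal_smul_volume hV.continuousOn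
      (fun c hc => (abs_of_pos (hVpos c hc)).trans_le (hVmax c hc)) hzF' hfix' ht ht'
  calc |zF t - zF' t'| ≤ |zF t - zF' t| + |zF' t - zF' t'| := abs_sub_le _ _ _
    _ ≤ _ := add_le_add hdist htime

/-- proof of Proposition 5: joint modulus of continuity of
`(t, F) ↦ z_F(t)`. If `Λ := 2·G·Lip(V)·(M·Tmax − 1 + e^{−M·Tmax})/M² < 1` and
`V ≤ Vmax`, then for the characteristic travel distances `z_F, z_{F′}` of
`F, F′ ∈ 𝒫_{m,G}` and all `t, t′ ∈ 𝒯`,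
`|z_F(t) − z_{F′}(t′)| ≤ e^{M·Tmax}·(Lip(V)/(1 − Λ))·∫₀^{Tmax} |F(S_s(z_F)) − F′(S_s(z_F))| ds
  + Vmax·|t − t′|`. -/
theorem characteristic_travel_distance_joint_modulus
    (Tmax Xmin Xmax G : ℝ) (hT : 0 < Tmax) (hXmin : 0 < Xmin) (hXX : Xmin < Xmax)
    (hG : 0 < G)
    (Td Ta : Set ℝ) (hTdc : IsCompact Td) (hTd : Td ⊆ Set.Icc 0 Tmax)
    (hTac : IsCompact Ta) (hTa : Ta ⊆ Set.Icc 0 Tmax)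
    (m : Measure (ℝ × ℝ)) (hm : IsProbabilityMeasure m)
    (V : ℝ → ℝ) (LV : NNReal) (hV : LipschitzOnWith LV V (Set.Ici 0))
    (hVpos : ∀ c : ℝ, 0 ≤ c → 0 < V c)
    (Vmax : ℝ) (hVmax : ∀ c : ℝ, 0 ≤ c → V c ≤ Vmax)
    (M : ℝ) (hM : 0 < M)
    (hΛ : 2 * G * (LV : ℝ) * (M * Tmax - 1 + Real.exp (-(M * Tmax))) / M ^ 2 < 1)
    (F F' : Measure (ℝ × ℝ))
    (hF : memP Td (Set.Icc Xmin Xmax) Ta m G F)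
    (hF' : memP Td (Set.Icc Xmin Xmax) Ta m G F')
    (zF zF' : ℝ → ℝ) (hzF : Continuous zF) (hzF' : Continuous zF')
    (hfix : ∀ t ∈ Set.Icc (0:ℝ) Tmax, zF t = Umap Td (Set.Icc Xmin Xmax) V F zF t)
    (hfix' : ∀ t ∈ Set.Icc (0:ℝ) Tmax, zF' t = Umap Td (Set.Icc Xmin Xmax) V F' zF' t) :
    ∀ t ∈ Set.Icc (0:ℝ) Tmax, ∀ t' ∈ Set.Icc (0:ℝ) Tmax,
      |zF t - zF' t'|
        ≤ Real.exp (M * Tmax)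
            * ((LV : ℝ) /
                (1 - 2 * G * (LV : ℝ) * (M * Tmax - 1 + Real.exp (-(M * Tmax))) / M ^ 2))
            * (∫ s in (0:ℝ)..Tmax,
                |(F (Sset Td (Set.Icc Xmin Xmax) zF s)).toReal
                  - (F' (Sset Td (Set.Icc Xmin Xmax) zF s)).toReal|)
          + Vmax * |t - t'| :=
  characteristic_travel_distance_joint_modulus_general Tmax Xmin Xmax G hG Td Ta m V LV hV hVpos
    Vmax hVmax M hM hΛ F F' hF hF' zF zF' hzF hzF' hfix hfix'
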